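/- Let X be a finite set and (λ_x)_{x∈X} a probability distribution. Then the minimum over all couplings (b_{x,x'}) of (λ_x) with itself of the diagonal mass ∑_x b_{x,x} equals max{2·max_x λ_x − 1, 0}. -/

import Mathlib

open Finset

/-- A coupling of the probability distribution `l` on a finite set with itself. -/
def IsSelfCoupling {X : Type*} [Fintype X] (l : X → ℝ) (b : X × X → ℝ) : Prop :=
  (∀ p, 0 ≤ b p) ∧ (∀ x, ∑ x', b (x, x') = l x) ∧ (∀ x', ∑ x, b (x, x') = l x')

private lemma colpt (a a' u : ℝ) (h0 : 0 ≤ a) (hle : a ≤ a') :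
    min a' (max a u) = a + (min a' (max 0 u) - min a (max 0 u)) := by
  rcases le_total u 0 with h | h
  · rw [max_eq_left (le_trans h h0), min_eq_right hle, max_eq_left h,
      min_eq_right (le_trans h0 hle), min_eq_right h0]
    ring
  · rw [max_eq_right h]
    rcases le_total u a with h1 | h1
    · rw [min_eq_right (le_trans h1 hle), min_eq_right h1,
        max_eq_left h1, min_eq_right hle]
      ring
    · rw [max_eq_right h1, min_eq_left h1]
      ring

private lemma rowpt (a a' : ℝ) (h0 : 0 ≤ a) (h1 : a' ≤ 1) (hle : a ≤ a') :
    (min a' (max a (1 + 1/2)) - min a' (max a (0 + 1/2)))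
      + (min a' (max a (1 - 1/2)) - min a' (max a (0 - 1/2))) = a' - a := by
  have e1 : min a' (max a (1 + 1/2)) = a' := by
    rw [max_eq_right (by linarith), min_eq_left (by linarith)]
  have e2 : min a' (max a (0 - 1/2)) = a := by
    rw [max_eq_left (by linarith), min_eq_right hle]
  rw [e1, e2, show (1:ℝ) - 1/2 = 0 + 1/2 by norm_num]
  ring

private lemma colfin (t t' lx : ℝ) (h0 : 0 ≤ t) (h1 : t' ≤ 1) (hlx : 0 ≤ lx) (ht : t' = t + lx) :
    (min 1 (max 0 (t' + 1/2)) - min 1 (max 0 (t + 1/2)))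
      + (min 1 (max 0 (t' - 1/2)) - min 1 (max 0 (t - 1/2))) = lx := by
  have e1 : max 0 (t + 1/2) = t + 1/2 := max_eq_right (by linarith)
  have e2 : max 0 (t' + 1/2) = t' + 1/2 := max_eq_right (by linarith)
  have e3 : min 1 (max 0 (t - 1/2)) = max 0 (t - 1/2) :=
    min_eq_right (max_le (by norm_num) (by linarith))
  have e4 : min 1 (max 0 (t' - 1/2)) = max 0 (t' - 1/2) :=
    min_eq_right (max_le (by norm_num) (by linarith))
  rw [e1, e2, e3, e4]
  simp only [min_def, max_def]
  split_ifs <;> linarith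

private lemma diagpt (a a' lx : ℝ) (h0 : 0 ≤ a) (h1 : a' ≤ 1) (hlx : 0 ≤ lx) (ht : a' = a + lx) :
    (min a' (max a (a' + 1/2)) - min a' (max a (a + 1/2)))
      + (min a' (max a (a' - 1/2)) - min a' (max a (a - 1/2))) = 2 * max 0 (lx - 1/2) := by
  have e1 : min a' (max a (a' + 1/2)) = a' := by
    rw [max_eq_right (by linarith), min_eq_left (by linarith)]
  have e2 : min a' (max a (a + 1/2)) = min a' (a + 1/2) := by
    rw [max_eq_right (by linarith)]
  have e3 : min a' (max a (a' - 1/2)) = max a (a' - 1/2) :=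
    min_eq_right (max_le (by linarith) (by linarith))
  have e4 : min a' (max a (a - 1/2)) = a := by
    rw [max_eq_left (by linarith), min_eq_right (by linarith)]
  rw [e1, e2, e3, e4]
  simp only [min_def, max_def]
  split_ifs <;> linarith

/-- the minimum of the diagonal mass over all couplings of `(λ_x)` with itself
equals `max {2 · max_x λ_x - 1, 0}`. -/
theorem min_diagonal_mass_of_couplings {X : Type*} [Fintype X] (l : X → ℝ)
    (hl0 : ∀ x, 0 ≤ l x) (hl1 : ∑ x, l x = 1)
    (M : ℝ) (hM : IsGreatest (Set.range l) M) :
    IsLeast {t : ℝ | ∃ b : X × X → ℝ, IsSelfCoupling l b ∧ ∑ x, b (x, x) = t}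
      (max (2 * M - 1) 0) := by
  classical
  obtain ⟨x₀, hx₀⟩ := hM.1
  constructor
  · -- construct an optimal coupling
    set n := Fintype.card X with hn
    set e := Fintype.equivFin X with he
    set l' : ℕ → ℝ := fun k => if h : k < n then l (e.symm ⟨k, h⟩) else 0 with hl'
    have hl'nn : ∀ k, 0 ≤ l' k := by
      intro k; rw [hl']; dsimp only; split
      · exact hl0 _
      · exact le_refl 0
    have hl'x : ∀ x : X, l' (e x) = l x := by
      intro x
      have h : ((e x : ℕ)) < n := (e x).isLt
      simp only [hl', dif_pos h, Fin.eta, Equiv.symm_apply_apply]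
    set s : ℕ → ℝ := fun k => ∑ i ∈ Finset.range k, l' i with hs
    have hs0 : s 0 = 0 := by simp [hs]
    have hssucc : ∀ k, s (k+1) = s k + l' k := fun k => Finset.sum_range_succ _ _
    have hsmono : Monotone s := by
      apply monotone_nat_of_le_succ; intro k; rw [hssucc]; linarith [hl'nn k]
    have hsnn : ∀ k, 0 ≤ s k := fun k => Finset.sum_nonneg fun i _ => hl'nn i
    have hsn : s n = 1 := by
      rw [hs]; dsimp only
      rw [← Fin.sum_univ_eq_sum_range, ← hl1, ← Equiv.sum_comp e.symm l]
      apply Finset.sum_congr rfl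
      intro i _
      simp [hl', i.isLt]
    have hsle1 : ∀ k, k ≤ n → s k ≤ 1 := fun k hk => hsn ▸ hsmono hk
    set c : ℕ → ℝ → ℝ := fun i u => min (s (i+1)) (max (s i) u) with hc
    have hcmono : ∀ i, Monotone (c i) := fun i u v huv =>
      min_le_min le_rfl (max_le_max le_rfl huv)
    set b : X × X → ℝ := fun p =>
      (c (e p.1) (s ((e p.2 : ℕ)+1) + 1/2) - c (e p.1) (s (e p.2) + 1/2)) +
      (c (e p.1) (s ((e p.2 : ℕ)+1) - 1/2) - c (e p.1) (s (e p.2) - 1/2)) with hbdef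
    have hb0 : ∀ p, 0 ≤ b p := by
      intro p
      have h1 : s (e p.2) ≤ s ((e p.2 : ℕ)+1) := hsmono (Nat.le_succ _)
      have h2 := hcmono (e p.1) (by linarith : s (e p.2) + 1/2 ≤ s ((e p.2 : ℕ)+1) + 1/2)
      have h3 := hcmono (e p.1) (sub_le_sub_right h1 (1/2))
      rw [hbdef]
      dsimp only
      have := sub_nonneg.mpr h2
      have := sub_nonneg.mpr h3
      linarith
    have hrow : ∀ x, ∑ x', b (x, x') = l x := by
      intro x
      have hre : ∑ x', b (x, x') = ∑ k ∈ Finset.range n,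
          ((c (e x) (s (k+1) + 1/2) - c (e x) (s k + 1/2)) +
            (c (e x) (s (k+1) - 1/2) - c (e x) (s k - 1/2))) := by
        rw [← Fin.sum_univ_eq_sum_range]
        exact Fintype.sum_equiv e _ _ (fun x' => rfl)
      rw [hre, Finset.sum_add_distrib,
          Finset.sum_range_sub (fun k => c (e x) (s k + 1/2)),
          Finset.sum_range_sub (fun k => c (e x) (s k - 1/2)), hsn, hs0]
      have key := rowpt (s (e x)) (s ((e x : ℕ)+1)) (hsnn _)
        (hsle1 _ ((e x).isLt)) (hsmono (Nat.le_succ _))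
      simp only [hc]
      rw [key, hssucc, hl'x]
      ring
    have hcol : ∀ x', ∑ x, b (x, x') = l x' := by
      intro x'
      have hsumc : ∀ u : ℝ, ∑ i ∈ Finset.range n, c i u
          = (∑ i ∈ Finset.range n, s i) + min 1 (max 0 u) := by
        intro u
        have hpt : ∀ i, c i u = s i + (min (s (i+1)) (max 0 u) - min (s i) (max 0 u)) :=
          fun i => colpt (s i) (s (i+1)) u (hsnn i) (hsmono (Nat.le_succ i))
        rw [Finset.sum_congr rfl (fun i _ => hpt i), Finset.sum_add_distrib,
          Finset.sum_range_sub (fun k => min (s k) (max 0 u)), hsn, hs0,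
          min_eq_left (le_max_left 0 u)]
        ring
      have hre : ∑ x, b (x, x') = ∑ k ∈ Finset.range n,
          ((c k (s ((e x' : ℕ)+1) + 1/2) - c k (s (e x') + 1/2)) +
            (c k (s ((e x' : ℕ)+1) - 1/2) - c k (s (e x') - 1/2))) := by
        rw [← Fin.sum_univ_eq_sum_range]
        exact Fintype.sum_equiv e _ _ (fun x => rfl)
      rw [hre, Finset.sum_add_distrib,
        Finset.sum_sub_distrib, Finset.sum_sub_distrib, hsumc, hsumc, hsumc, hsumc]
      have key := colfin (s (e x')) (s ((e x' : ℕ)+1)) (l' (e x')) (hsnn _)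
        (hsle1 _ ((e x').isLt)) (hl'nn _) (hssucc _)
      rw [hl'x] at key
      linarith
    have hdiag : ∀ x, b (x, x) = 2 * max 0 (l x - 1/2) := by
      intro x
      have key := diagpt (s (e x)) (s ((e x : ℕ)+1)) (l' (e x)) (hsnn _)
        (hsle1 _ ((e x).isLt)) (hl'nn _) (hssucc _)
      rw [hl'x] at key
      rw [hbdef]
      dsimp only
      simp only [hc]
      exact key
    have hdsum : ∑ x, b (x, x) = max (2 * M - 1) 0 := by
      rw [Finset.sum_congr rfl (fun x _ => hdiag x)]
      rcases le_total M (1/2) with hM2 | hM2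
      · have hz : ∀ x ∈ Finset.univ, 2 * max 0 (l x - 1/2) = (0:ℝ) := by
          intro x _
          have hx : l x ≤ M := hM.2 (Set.mem_range_self x)
          rw [max_eq_left (by linarith)]
          ring
        rw [Finset.sum_congr rfl hz, Finset.sum_const_zero,
          max_eq_right (by linarith : 2 * M - 1 ≤ (0:ℝ))]
      · have hle1 : ∀ x, x ≠ x₀ → l x ≤ 1 - M := by
          intro x hx
          have hpair : l x + l x₀ ≤ ∑ y, l y := by
            have hsub := Finset.sum_le_sum_of_subset_of_nonneg
              (Finset.subset_univ ({x, x₀} : Finset X)) (fun y _ _ => hl0 y)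
            rwa [Finset.sum_pair hx] at hsub
          rw [hl1, hx₀] at hpair; linarith
        rw [Finset.sum_eq_single x₀]
        · rw [hx₀, max_eq_right (by linarith : (0:ℝ) ≤ M - 1/2),
            max_eq_left (by linarith : 2 * M - 1 ≥ (0:ℝ))]
          ring
        · intro x _ hx
          rw [max_eq_left (by linarith [hle1 x hx] : l x - 1/2 ≤ 0)]
          ring
        · intro h; exact absurd (Finset.mem_univ x₀) h
    exact ⟨b, ⟨hb0, hrow, hcol⟩, hdsum⟩
  · rintro t ⟨b, ⟨hb0, hrow, hcol⟩, rfl⟩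
    have ht0 : 0 ≤ ∑ x, b (x, x) := Finset.sum_nonneg fun x _ => hb0 _
    have hbd : b (x₀, x₀) ≤ ∑ x, b (x, x) :=
      Finset.single_le_sum (f := fun x => b (x, x)) (fun x _ => hb0 (x, x)) (mem_univ x₀)
    have h1 : ∑ x' ∈ univ.erase x₀, b (x₀, x') ≤ ∑ x' ∈ univ.erase x₀, l x' := by
      apply Finset.sum_le_sum
      intro x' _
      calc b (x₀, x') ≤ ∑ x, b (x, x') :=
            Finset.single_le_sum (f := fun x => b (x, x')) (fun x _ => hb0 _) (mem_univ x₀)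
        _ = l x' := hcol x'
    have h2 : ∑ x' ∈ univ.erase x₀, l x' = 1 - M := by
      have h := Finset.add_sum_erase univ l (mem_univ x₀)
      rw [hl1, hx₀] at h
      linarith
    have h3 : b (x₀, x₀) + ∑ x' ∈ univ.erase x₀, b (x₀, x') = l x₀ := by
      rw [← hrow x₀]
      exact Finset.add_sum_erase univ (fun x' => b (x₀, x')) (mem_univ x₀)
    apply max_le
    · rw [hx₀] at h3
      linarith
    · exact ht0
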